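/- arXiv:2105.00158 — 3 statements merged into one kernel-verified Lean document; each statement's English description precedes it below -/
import Mathlib

section
/- If y : (ZMod m × ZMod n) → ℝ is centrosymmetric, then for every d-channel sample x and every d-channel filter f, the squared ℓ² error of the convolution response of the channelwise-reflected filter equals that of the correlation response of the original filter: ‖R'(x; σf) − y‖² = ‖R(x; f) − y‖². -/
open Finset

noncomputable section

variable {m n : ℕ} [NeZero m] [NeZero n]

/-- Circular correlation: `(x ∘ f)(t) = ∑ s, x s * f (s + t)`. -/
def corr (x f : ZMod m × ZMod n → ℝ) : ZMod m × ZMod n → ℝ :=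
  fun t => ∑ s : ZMod m × ZMod n, x s * f (s + t)

/-- Circular convolution: `(x ⋆ f)(t) = ∑ s, x s * f (t - s)`. -/
def conv (x f : ZMod m × ZMod n → ℝ) : ZMod m × ZMod n → ℝ :=
  fun t => ∑ s : ZMod m × ZMod n, x s * f (t - s)

/-- Reflection: `(σ f)(t) = f (-t)`. -/
def reflect (f : ZMod m × ZMod n → ℝ) : ZMod m × ZMod n → ℝ :=
  fun t => f (-t)

variable {d : ℕ}

/-- Multichannel correlation response `R(x;f) = ∑ l, x^l ∘ f^l`. -/
def corrResp (x f : Fin d → (ZMod m × ZMod n → ℝ)) : ZMod m × ZMod n → ℝ :=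
  fun t => ∑ l : Fin d, corr (x l) (f l) t

/-- Multichannel convolution response `R'(x;f) = ∑ l, x^l ⋆ f^l`. -/
def convResp (x f : Fin d → (ZMod m × ZMod n → ℝ)) : ZMod m × ZMod n → ℝ :=
  fun t => ∑ l : Fin d, conv (x l) (f l) t

/-- Channelwise reflection. -/
def creflect (f : Fin d → (ZMod m × ZMod n → ℝ)) : Fin d → (ZMod m × ZMod n → ℝ) :=
  fun l => reflect (f l)

/-- Squared ℓ² norm on `G → ℝ`. -/
def normSq (g : ZMod m × ZMod n → ℝ) : ℝ :=
  ∑ t : ZMod m × ZMod n, (g t) ^ 2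

/-- If `y` is centrosymmetric, then
`‖R'(x; σf) − y‖² = ‖R(x; f) − y‖²`. -/
theorem normSq_convResp_creflect_sub_eq (y : ZMod m × ZMod n → ℝ)
    (hy : ∀ t : ZMod m × ZMod n, y (-t) = y t)
    (x f : Fin d → (ZMod m × ZMod n → ℝ)) :
    normSq (fun t => convResp x (creflect f) t - y t) =
      normSq (fun t => corrResp x f t - y t) := by
  have key : ∀ t, convResp x (creflect f) t = corrResp x f (-t) := by
    intro t
    unfold convResp corrResp conv corr creflect reflect
    refine Finset.sum_congr rfl fun l _ => Finset.sum_congr rfl fun s _ => ?_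
    congr 1
    · ring
  unfold normSq
  exact Fintype.sum_equiv (Equiv.neg (ZMod m × ZMod n)) _ _ fun t => by
    simp [key, hy]
end
end

section
/- If y : (ZMod m × ZMod n) → ℝ is centrosymmetric, then for every d-channel filter f the convolution objective evaluated at the channelwise-reflected filter equals the correlation objective evaluated at f: E'(σf) = E(f). -/
open Finset

noncomputable section

variable {m n : ℕ} [NeZero m] [NeZero n]

variable {d : ℕ}

variable {T : ℕ}

/-- Correlation objective. -/
def corrObj (x : Fin T → Fin d → (ZMod m × ZMod n → ℝ)) (α : Fin T → ℝ) (lam : ℝ)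
    (y : ZMod m × ZMod n → ℝ) (f : Fin d → (ZMod m × ZMod n → ℝ)) : ℝ :=
  (∑ k : Fin T, α k * normSq (fun t => corrResp (x k) f t - y t)) +
    lam * ∑ l : Fin d, normSq (f l)

/-- Convolution objective. -/
def convObj (x : Fin T → Fin d → (ZMod m × ZMod n → ℝ)) (α : Fin T → ℝ) (lam : ℝ)
    (y : ZMod m × ZMod n → ℝ) (f : Fin d → (ZMod m × ZMod n → ℝ)) : ℝ :=
  (∑ k : Fin T, α k * normSq (fun t => convResp (x k) f t - y t)) +
    lam * ∑ l : Fin d, normSq (f l)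


lemma conv_reflect_eq (x g : ZMod m × ZMod n → ℝ) (t : ZMod m × ZMod n) :
    conv x (reflect g) t = corr x g (-t) := by
  simp only [conv, corr, reflect, sub_eq_add_neg]
  exact Finset.sum_congr rfl fun s _ => by rw [show -(t + -s) = s + -t by ring]

lemma normSq_neg_comp (g : ZMod m × ZMod n → ℝ) :
    normSq (fun t => g (-t)) = normSq g := by
  unfold normSq
  exact Fintype.sum_equiv (Equiv.neg _) _ _ (fun t => rfl)

/-- If `y` is centrosymmetric, then `E'(σf) = E(f)`. -/
theorem convObj_creflect_eq_corrObj (x : Fin T → Fin d → (ZMod m × ZMod n → ℝ))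
    (α : Fin T → ℝ) (lam : ℝ) (y : ZMod m × ZMod n → ℝ)
    (hy : ∀ t : ZMod m × ZMod n, y (-t) = y t)
    (f : Fin d → (ZMod m × ZMod n → ℝ)) :
    convObj x α lam y (creflect f) = corrObj x α lam y f := by
  unfold convObj corrObj
  congr 1
  · refine Finset.sum_congr rfl fun k _ => ?_
    congr 1
    have : (fun t => convResp (x k) (creflect f) t - y t)
        = fun t => (fun u => corrResp (x k) f u - y u) (-t) := by
      funext t
      simp only [convResp, corrResp, creflect, conv_reflect_eq, hy]
    rw [this]; exact normSq_neg_comp (fun u => corrResp (x k) f u - y u)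
  · congr 1
    refine Finset.sum_congr rfl fun l _ => ?_
    exact normSq_neg_comp (f l)
end
end

section
/- If y : (ZMod m × ZMod n) → ℝ is centrosymmetric, then the correlation objective E has a global minimizer if and only if the convolution objective E' has a global minimizer. -/
open Finset

noncomputable section

variable {m n : ℕ} [NeZero m] [NeZero n]

variable {d : ℕ}

variable {T : ℕ}

lemma creflect_creflect (f : Fin d → (ZMod m × ZMod n → ℝ)) :
    creflect (creflect f) = f := by
  funext l t
  simp [creflect, reflect]

lemma normSq_reflect (g : ZMod m × ZMod n → ℝ) : normSq (reflect g) = normSq g := by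
  unfold normSq reflect
  exact Fintype.sum_equiv (Equiv.neg _) _ _ (fun t => rfl)

lemma corrResp_creflect (x f : Fin d → (ZMod m × ZMod n → ℝ)) (t : ZMod m × ZMod n) :
    corrResp x (creflect f) t = convResp x f (-t) := by
  unfold corrResp convResp corr conv creflect reflect
  refine Finset.sum_congr rfl fun l _ => Finset.sum_congr rfl fun s _ => ?_
  have h : -(s + t) = -t - s := by ring
  rw [h]

lemma convObj_eq (x : Fin T → Fin d → (ZMod m × ZMod n → ℝ)) (α : Fin T → ℝ) (lam : ℝ)
    (y : ZMod m × ZMod n → ℝ) (hy : ∀ t : ZMod m × ZMod n, y (-t) = y t)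
    (f : Fin d → (ZMod m × ZMod n → ℝ)) :
    convObj x α lam y f = corrObj x α lam y (creflect f) := by
  unfold convObj corrObj
  congr 1
  · refine Finset.sum_congr rfl fun k _ => ?_
    congr 1
    unfold normSq
    refine Fintype.sum_equiv (Equiv.neg _) _ _ (fun t => ?_)
    simp only [Equiv.neg_apply]
    rw [corrResp_creflect, neg_neg, hy]
  · congr 1
    exact (Finset.sum_congr rfl fun l _ => (normSq_reflect (f l)).symm)

/-- If `y` is centrosymmetric, `E` has a global minimizer iff `E'` has one. -/
theorem exists_min_corrObj_iff_exists_min_convObj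
    (x : Fin T → Fin d → (ZMod m × ZMod n → ℝ)) (α : Fin T → ℝ) (lam : ℝ)
    (y : ZMod m × ZMod n → ℝ) (hy : ∀ t : ZMod m × ZMod n, y (-t) = y t) :
    (∃ f : Fin d → (ZMod m × ZMod n → ℝ),
        ∀ g : Fin d → (ZMod m × ZMod n → ℝ), corrObj x α lam y f ≤ corrObj x α lam y g) ↔
      (∃ f : Fin d → (ZMod m × ZMod n → ℝ),
        ∀ g : Fin d → (ZMod m × ZMod n → ℝ), convObj x α lam y f ≤ convObj x α lam y g) := by
  constructor
  · rintro ⟨f, hf⟩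
    exact ⟨creflect f, fun g => by
      rw [convObj_eq x α lam y hy, convObj_eq x α lam y hy, creflect_creflect]
      exact hf _⟩
  · rintro ⟨f, hf⟩
    exact ⟨creflect f, fun g => by
      have h1 : corrObj x α lam y (creflect f) = convObj x α lam y f := by
        rw [convObj_eq x α lam y hy]
      have h2 : corrObj x α lam y g = convObj x α lam y (creflect g) := by
        rw [convObj_eq x α lam y hy, creflect_creflect]
      rw [h1, h2]; exact hf _⟩
end
end
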